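/- arXiv:2009.04992 — 2 statements merged into one kernel-verified Lean document; each statement's English description precedes it below -/
import Mathlib

section
/- Let w^F be a weight assignment of an unweighted multi-hypergraph H = (V, E) (every hyperedge of size at least 2) and let ρ > 0 be a real parameter. Then for every integer i ≥ 0 and every hyperedge e ∈ E_{≥i}, all vertices of e belong to the same connected component of the graph on V whose edges are the positive-weight edges f ∈ F with k_f ≥ ρ·2^i (that is, the same connected component of G_{≥i}). -/
open Finset
open scoped Classical

/-- An edge `f` crosses the cut `S` if exactly one of its endpoints lies in `S`. -/
def crossesCut {V F : Type} (ep : F → V × V) (S : Finset V) (f : F) : Prop :=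
  ((ep f).1 ∈ S ∧ (ep f).2 ∉ S) ∨ ((ep f).1 ∉ S ∧ (ep f).2 ∈ S)

/-- Total weight of edges of the induced subgraph `G[X]` crossing the cut `S`. -/
noncomputable def cutWt {V F : Type} [Fintype F] (ep : F → V × V) (w : F → ℝ)
    (X S : Finset V) : ℝ :=
  ∑ f : F, if (ep f).1 ∈ X ∧ (ep f).2 ∈ X ∧ crossesCut ep S f then w f else 0

/-- The min-cut of the induced subgraph `G[X]`: the least total weight of edges of `G[X]`
crossing a cut `(S, X \ S)` with `∅ ⊊ S ⊊ X`. -/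
noncomputable def minCutIn {V F : Type} [Fintype F] (ep : F → V × V) (w : F → ℝ)
    (X : Finset V) : ℝ :=
  sInf {c : ℝ | ∃ S : Finset V, S ⊆ X ∧ S.Nonempty ∧ S ≠ X ∧ c = cutWt ep w X S}

/-- The strength of an edge `f`: the maximum of the min-cut of `G[X]` over all vertex
sets `X` containing both endpoints of `f`. -/
noncomputable def strength {V F : Type} [Fintype V] [Fintype F] (ep : F → V × V)
    (w : F → ℝ) (f : F) : ℝ :=
  sSup {c : ℝ | ∃ X : Finset V, (ep f).1 ∈ X ∧ (ep f).2 ∈ X ∧ c = minCutIn ep w X}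


/-- A hyperedge `e` crosses the cut `S` if it has at least one vertex in `S` and at least
one vertex outside `S`. -/
def hCrosses {V E : Type} (he : E → Finset V) (S : Finset V) (e : E) : Prop :=
  ((he e) ∩ S).Nonempty ∧ ((he e) \ S).Nonempty

/-- The (multiset) union over the hyperedges `e` of the edge set `F_e` of the clique on the
vertex set of `e`: an element records the hyperedge `e` and an unordered pair of distinct
vertices of `e` (normalized so that the first vertex is smaller). -/
abbrev CliqueEdges {V E : Type} [LinearOrder V] (he : E → Finset V) : Type :=
  {p : E × V × V // p.2.1 ∈ he p.1 ∧ p.2.2 ∈ he p.1 ∧ p.2.1 < p.2.2}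

/-- The endpoints of a clique edge. -/
def cep {V E : Type} [LinearOrder V] (he : E → Finset V) : CliqueEdges he → V × V :=
  fun f => f.1.2

/-- `κ_e`: the minimum strength of an edge of the clique `F_e` in the auxiliary graph
`G = (V, F, w)`. -/
noncomputable def kappa {V E : Type} [Fintype V] [LinearOrder V] [Fintype E]
    (he : E → Finset V) (w : CliqueEdges he → ℝ) (e : E) : ℝ :=
  sInf {c : ℝ | ∃ f : CliqueEdges he, f.1.1 = e ∧ c = strength (cep he) w f}

/-- `κ_e^max`: the maximum strength of a positive-weight edge of the clique `F_e` in the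
auxiliary graph `G = (V, F, w)`. -/
noncomputable def kappaMax {V E : Type} [Fintype V] [LinearOrder V] [Fintype E]
    (he : E → Finset V) (w : CliqueEdges he → ℝ) (e : E) : ℝ :=
  sSup {c : ℝ | ∃ f : CliqueEdges he, f.1.1 = e ∧ 0 < w f ∧ c = strength (cep he) w f}

/-- A weight assignment `w : F → ℝ≥0` is `γ`-balanced if for each hyperedge `e` the weights of
the clique `F_e` sum to `1` and `κ_e^max ≤ γ·κ_e`. -/
def BalancedAssignment {V E : Type} [Fintype V] [LinearOrder V] [Fintype E]
    (he : E → Finset V) (w : CliqueEdges he → ℝ) (γ : ℝ) : Prop :=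
  ∀ e : E, (∑ f : CliqueEdges he, if f.1.1 = e then w f else 0) = 1 ∧
    kappaMax he w e ≤ γ * kappa he w e

section Helpers
variable {V F : Type} [Fintype V] [Fintype F] (ep : F → V × V) (w : F → ℝ)

lemma cutWt_nonneg (hw : ∀ f, 0 ≤ w f) (X S : Finset V) : 0 ≤ cutWt ep w X S := by
  apply Finset.sum_nonneg
  intro f _
  split <;> simp [hw f]

lemma minCutIn_nonneg (hw : ∀ f, 0 ≤ w f) (X : Finset V) : 0 ≤ minCutIn ep w X := by
  rcases Set.eq_empty_or_nonempty
      {c : ℝ | ∃ S : Finset V, S ⊆ X ∧ S.Nonempty ∧ S ≠ X ∧ c = cutWt ep w X S} with h | h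
  · rw [minCutIn, h, Real.sInf_empty]
  · exact le_csInf h (by rintro c ⟨S, _, _, _, rfl⟩; exact cutWt_nonneg ep w hw X S)

lemma strengthSet_finite (f : F) :
    {c : ℝ | ∃ X : Finset V, (ep f).1 ∈ X ∧ (ep f).2 ∈ X ∧ c = minCutIn ep w X}.Finite :=
  Set.Finite.subset (Set.finite_range (minCutIn ep w))
    (by rintro c ⟨X, _, _, rfl⟩; exact ⟨X, rfl⟩)

lemma strengthSet_nonempty (f : F) :
    {c : ℝ | ∃ X : Finset V, (ep f).1 ∈ X ∧ (ep f).2 ∈ X ∧ c = minCutIn ep w X}.Nonempty :=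
  ⟨minCutIn ep w Finset.univ, Finset.univ, Finset.mem_univ _, Finset.mem_univ _, rfl⟩

lemma strength_attained (f : F) :
    ∃ X : Finset V, (ep f).1 ∈ X ∧ (ep f).2 ∈ X ∧ strength ep w f = minCutIn ep w X := by
  have h := (strengthSet_nonempty ep w f).csSup_mem (strengthSet_finite ep w f)
  obtain ⟨X, h1, h2, h3⟩ := h
  exact ⟨X, h1, h2, h3⟩

lemma strength_nonneg (hw : ∀ f, 0 ≤ w f) (f : F) : 0 ≤ strength ep w f := by
  obtain ⟨X, _, _, h3⟩ := strength_attained ep w f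
  rw [h3]; exact minCutIn_nonneg ep w hw X

lemma minCutIn_le_strength (f : F) (X : Finset V) (h1 : (ep f).1 ∈ X) (h2 : (ep f).2 ∈ X) :
    minCutIn ep w X ≤ strength ep w f :=
  le_csSup ((strengthSet_finite ep w f).bddAbove) ⟨X, h1, h2, rfl⟩

lemma minCutIn_le_cutWt (hw : ∀ f, 0 ≤ w f) (X S : Finset V)
    (hS : S ⊆ X) (hne : S.Nonempty) (hneq : S ≠ X) : minCutIn ep w X ≤ cutWt ep w X S :=
  csInf_le ⟨0, by rintro c ⟨S', _, _, _, rfl⟩; exact cutWt_nonneg ep w hw X S'⟩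
    ⟨S, hS, hne, hneq, rfl⟩

end Helpers

/-- Let `ρ > 0`, let `i ≥ 0` and let `G_{≥i}` be the graph on `V` whose edges
are the positive-weight clique edges `f` with strength `k_f ≥ ρ·2^i`.  Then for every hyperedge
`e` with `κ_e ≥ ρ·2^i`, all vertices of `e` lie in the same connected component of `G_{≥i}`. -/
theorem stmt12 {V E : Type} [Fintype V] [LinearOrder V] [Fintype E]
    (he : E → Finset V) (hhe : ∀ e, 2 ≤ (he e).card)
    (w : CliqueEdges he → ℝ) (hw : ∀ f, 0 ≤ w f)
    (ρ : ℝ) (hρ : 0 < ρ) (i : ℕ)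
    (e : E) (hκ : ρ * 2 ^ i ≤ kappa he w e) :
    ∀ u ∈ he e, ∀ v ∈ he e,
      (SimpleGraph.fromRel (fun a b => ∃ f : CliqueEdges he,
        0 < w f ∧ ρ * 2 ^ i ≤ strength (cep he) w f ∧ cep he f = (a, b))).Reachable u v := by

  set G := SimpleGraph.fromRel (fun a b => ∃ f : CliqueEdges he,
      0 < w f ∧ ρ * 2 ^ i ≤ strength (cep he) w f ∧ cep he f = (a, b)) with hG
  have key : ∀ u ∈ he e, ∀ v ∈ he e, u < v → G.Reachable u v := by
    intro u hu v hv huv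
    by_contra hnr
    set f0 : CliqueEdges he := ⟨(e, u, v), hu, hv, huv⟩ with hf0
    have hk0 : ρ * 2 ^ i ≤ strength (cep he) w f0 := by
      refine le_trans hκ (csInf_le ⟨0, ?_⟩ ⟨f0, rfl, rfl⟩)
      rintro c ⟨g, _, rfl⟩
      exact strength_nonneg _ w hw g
    obtain ⟨X, hX1, hX2, hX3⟩ := strength_attained (cep he) w f0
    have huX : u ∈ X := hX1
    have hvX : v ∈ X := hX2
    set S : Finset V := (Finset.univ.filter (fun x => G.Reachable u x)) ∩ X with hSdef
    have huS : u ∈ S := Finset.mem_inter.2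
      ⟨Finset.mem_filter.2 ⟨Finset.mem_univ u, SimpleGraph.Reachable.refl u⟩, huX⟩
    have hvS : v ∉ S := fun h => hnr (Finset.mem_filter.1 (Finset.mem_inter.1 h).1).2
    have hSX : S ⊆ X := Finset.inter_subset_right
    have hSne : S.Nonempty := ⟨u, huS⟩
    have hSneq : S ≠ X := fun h => hvS (h ▸ hvX)
    rw [hX3] at hk0
    by_cases hex : ∃ g : CliqueEdges he,
        0 < w g ∧ (cep he g).1 ∈ X ∧ (cep he g).2 ∈ X ∧ crossesCut (cep he) S g
    · obtain ⟨g, hgw, hg1, hg2, hgc⟩ := hex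
      have hle : minCutIn (cep he) w X ≤ strength (cep he) w g :=
        minCutIn_le_strength _ w g X hg1 hg2
      have hlt : strength (cep he) w g < ρ * 2 ^ i := by
        by_contra hge
        push_neg at hge
        have hne : (cep he g).1 ≠ (cep he g).2 := by
          rcases hgc with ⟨h1, h2⟩ | ⟨h1, h2⟩
          · exact fun h => h2 (h ▸ h1)
          · exact fun h => h1 (h ▸ h2)
        have hadj : G.Adj (cep he g).1 (cep he g).2 := by
          rw [hG]
          rw [SimpleGraph.fromRel_adj]
          exact ⟨hne, Or.inl ⟨g, hgw, hge, rfl⟩⟩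
        rcases hgc with ⟨h1, h2⟩ | ⟨h1, h2⟩
        · have hr : G.Reachable u (cep he g).1 :=
            (Finset.mem_filter.1 (Finset.mem_inter.1 h1).1).2
          exact h2 (Finset.mem_inter.2 ⟨Finset.mem_filter.2
            ⟨Finset.mem_univ _, hr.trans hadj.reachable⟩, hg2⟩)
        · have hr : G.Reachable u (cep he g).2 :=
            (Finset.mem_filter.1 (Finset.mem_inter.1 h2).1).2
          exact h1 (Finset.mem_inter.2 ⟨Finset.mem_filter.2
            ⟨Finset.mem_univ _, hr.trans hadj.symm.reachable⟩, hg1⟩)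
      linarith
    · have hcut0 : cutWt (cep he) w X S = 0 := by
        apply Finset.sum_eq_zero
        intro g _
        split_ifs with h
        · obtain ⟨h1, h2, h3⟩ := h
          by_contra hne
          exact hex ⟨g, lt_of_le_of_ne (hw g) (Ne.symm hne), h1, h2, h3⟩
        · rfl
      have hle := minCutIn_le_cutWt (cep he) w hw X S hSX hSne hSneq
      have hpos : 0 < ρ * 2 ^ i := by positivity
      linarith
  intro u hu v hv
  rcases lt_trichotomy u v with h | h | h
  · exact key u hu v hv h
  · exact h ▸ SimpleGraph.Reachable.refl u
  · exact (key v hv u hu h).symm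
end

section
/- Let H = (V, E, w) be a weighted hypergraph with |V| ≥ 2 in which every hyperedge has at least 2 vertices, let ε ∈ (0,1], and let Ĥ = (V, Ê, ŵ) be a (1±ε/2)-approximate cut sparsifier of H. Then the total weight of Ĥ is at most three times the total weight of H, i.e., ŵ(Ê) ≤ 3·w(E). -/
open Finset
open scoped Classical

/-- The weight of the cut `S` in the weighted hypergraph `(V, E, w)`. -/
noncomputable def hCutWt {V E : Type} [Fintype E] (he : E → Finset V) (w : E → ℝ)
    (S : Finset V) : ℝ :=
  ∑ e : E, if hCrosses he S e then w e else 0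

open scoped symmDiff

/-! Every hyperedge with at least two vertices crosses at least half of the `2 ^ |V|` vertex
sets, so averaging the sparsifier's cut weights over all `S` bounds `2 ^ (|V| - 1) · ŵ(Ê)` by
`2 ^ |V|` times the largest sparsified cut. Each sparsified cut has weight at most
`(1 + ε/2) · w(δ(S)) ≤ 3/2 · w(E)`. -/

section Crossing

variable {V E : Type} {he : E → Finset V} {S : Finset V} {e : E}

lemma hCrosses.nonempty (h : hCrosses he S e) : S.Nonempty :=
  h.1.mono inter_subset_right

lemma hCrosses.ne_univ [Fintype V] (h : hCrosses he S e) : S ≠ univ := by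
  rintro rfl
  obtain ⟨x, hx⟩ := h.2
  exact (mem_sdiff.mp hx).2 (mem_univ x)

/-- Toggling a fixed vertex `a ∈ he e` turns every set not crossed by `e` into one crossed by
`e`, injectively. -/
lemma two_pow_card_le_two_mul_card_hCrosses [Fintype V] (he2 : 2 ≤ (he e).card) :
    2 ^ Fintype.card V ≤ 2 * #{S : Finset V | hCrosses he S e} := by
  obtain ⟨a, ha, b, hb, hab⟩ := one_lt_card.mp he2
  have toggle : #{S : Finset V | ¬ hCrosses he S e} ≤ #{S : Finset V | hCrosses he S e} := by
    refine card_le_card_of_injOn (· ∆ {a}) ?_ (symmDiff_left_injective _).injOn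
    intro S hS
    rw [mem_coe, mem_filter, hCrosses, not_and_or, not_nonempty_iff_eq_empty,
      not_nonempty_iff_eq_empty, ← disjoint_iff_inter_eq_empty, sdiff_eq_empty_iff_subset] at hS
    rw [mem_coe, mem_filter]
    refine ⟨mem_univ _, ?_⟩
    rcases hS.2 with hdisj | hsub
    · have haS : a ∉ S := disjoint_left.mp hdisj ha
      have hbS : b ∉ S := disjoint_left.mp hdisj hb
      exact ⟨⟨a, mem_inter.mpr ⟨ha, by simp [mem_symmDiff, haS]⟩⟩,
        ⟨b, mem_sdiff.mpr ⟨hb, by simp [mem_symmDiff, hbS, hab.symm]⟩⟩⟩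
    · exact ⟨⟨b, mem_inter.mpr ⟨hb, by simp [mem_symmDiff, hsub hb, hab.symm]⟩⟩,
        ⟨a, mem_sdiff.mpr ⟨ha, by simp [mem_symmDiff, hsub ha]⟩⟩⟩
  have split := card_filter_add_card_filter_not (s := univ) (hCrosses he · e)
  rw [card_univ, Fintype.card_finset] at split
  omega

end Crossing

lemma hCutWt_nonneg {V E : Type} [Fintype E] (he : E → Finset V) {w : E → ℝ}
    (hw : ∀ e, 0 ≤ w e) (S : Finset V) : 0 ≤ hCutWt he w S :=
  sum_nonneg fun e _ => by split_ifs <;> simp [hw e]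

lemma hCutWt_le_sum {V E : Type} [Fintype E] (he : E → Finset V) {w : E → ℝ}
    (hw : ∀ e, 0 ≤ w e) (S : Finset V) : hCutWt he w S ≤ ∑ e, w e :=
  sum_le_sum fun e _ => by split_ifs <;> simp [hw e]

lemma two_pow_card_mul_sum_le_two_mul_sum_cuts {V E : Type} [Fintype V]
    (he : E → Finset V) (hhe : ∀ e, 2 ≤ (he e).card) (s : Finset E) {u : E → ℝ}
    (hu : ∀ e, 0 ≤ u e) :
    2 ^ Fintype.card V * ∑ e ∈ s, u e
      ≤ 2 * ∑ S : Finset V, ∑ e ∈ s, if hCrosses he S e then u e else 0 := by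
  calc 2 ^ Fintype.card V * ∑ e ∈ s, u e
      ≤ ∑ e ∈ s, 2 * (#{S : Finset V | hCrosses he S e} : ℝ) * u e := by
        rw [mul_sum]
        gcongr with e
        · exact hu e
        · exact_mod_cast two_pow_card_le_two_mul_card_hCrosses (hhe e)
    _ = 2 * ∑ S : Finset V, ∑ e ∈ s, if hCrosses he S e then u e else 0 := by
        rw [sum_comm, mul_sum]
        refine sum_congr rfl fun e _ => ?_
        rw [← sum_filter, sum_const, nsmul_eq_mul]
        ring

theorem stmt17_general {V E : Type} [Fintype V] [Fintype E]
    (he : E → Finset V) (hhe : ∀ e, 2 ≤ (he e).card)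
    (w : E → ℝ) (hw : ∀ e, 0 ≤ w e)
    (ε : ℝ) (hε1 : ε ≤ 1)
    (Ehat : Finset E) (what : E → ℝ) (hwhat : ∀ e, 0 ≤ what e)
    (hsp : ∀ S : Finset V, S.Nonempty → S ≠ Finset.univ →
      |(∑ e ∈ Ehat, if hCrosses he S e then what e else 0) - hCutWt he w S|
        ≤ (ε / 2) * hCutWt he w S) :
    ∑ e ∈ Ehat, what e ≤ 3 * ∑ e : E, w e := by
  have cut_le : ∀ S : Finset V,
      (∑ e ∈ Ehat, if hCrosses he S e then what e else 0) ≤ 3 / 2 * ∑ e, w e := by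
    intro S
    by_cases hS : S.Nonempty ∧ S ≠ univ
    · have hdev := (abs_le.mp (hsp S hS.1 hS.2)).2
      have hcut0 := hCutWt_nonneg he hw S
      have hcutE := hCutWt_le_sum he hw S
      nlinarith
    · rw [sum_eq_zero fun e _ => if_neg fun hc => hS ⟨hc.nonempty, hc.ne_univ⟩]
      exact mul_nonneg (by norm_num) (sum_nonneg fun e _ => hw e)
  have average := two_pow_card_mul_sum_le_two_mul_sum_cuts he hhe Ehat hwhat
  have cuts : ∑ S : Finset V, ∑ e ∈ Ehat, (if hCrosses he S e then what e else 0)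
      ≤ 2 ^ Fintype.card V * (3 / 2 * ∑ e, w e) := by
    simpa [card_univ, Fintype.card_finset] using sum_le_sum fun S (_ : S ∈ univ) => cut_le S
  refine le_of_mul_le_mul_left ?_ (by positivity : (0 : ℝ) < 2 ^ Fintype.card V)
  linarith

/-- If `Ĥ` is a `(1 ± ε/2)`-approximate cut sparsifier (for `ε ∈ (0,1]`) of a
weighted hypergraph `H` on at least 2 vertices all of whose hyperedges have at least 2 vertices,
then the total weight of `Ĥ` is at most three times the total weight of `H`. -/
theorem stmt17 {V E : Type} [Fintype V] [Fintype E]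
    (he : E → Finset V) (hhe : ∀ e, 2 ≤ (he e).card)
    (hV : 2 ≤ Fintype.card V)
    (w : E → ℝ) (hw : ∀ e, 0 ≤ w e)
    (ε : ℝ) (hε0 : 0 < ε) (hε1 : ε ≤ 1)
    (Ehat : Finset E) (what : E → ℝ) (hwhat : ∀ e, 0 ≤ what e)
    (hsp : ∀ S : Finset V, S.Nonempty → S ≠ Finset.univ →
      |(∑ e ∈ Ehat, if hCrosses he S e then what e else 0) - hCutWt he w S|
        ≤ (ε / 2) * hCutWt he w S) :
    ∑ e ∈ Ehat, what e ≤ 3 * ∑ e : E, w e :=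
  stmt17_general he hhe w hw ε hε1 Ehat what hwhat hsp
end
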